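/- Let D = {(x, x_d) : x_d > φ(x)} where φ : ℝ^{d-1} → ℝ is C¹ with modulus of continuity θ for ∇φ (|∇φ(x) - ∇φ(y)| ≤ θ(|x-y|)). Let p ∈ D and r > 0 with r θ(r) ≤ dist(p, ∂D). Then for every boundary point X = (x, φ(x)) ∈ B_r(p) ∩ ∂D, ⟨X - p, n_D(X)⟩ ≥ 0, where n_D(X) = (∇φ(x), -1)/√(1+|∇φ(x)|²) is the outer unit normal. -/

import Mathlib

open Metric

local notation "⟪" x ", " y "⟫" => inner (𝕜 := ℝ) x y

/-- Projection of `ℝ^{n+1}` onto the first `n` coordinates. -/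
def proj (n : ℕ) (x : EuclideanSpace ℝ (Fin (n + 1))) : EuclideanSpace ℝ (Fin n) :=
  WithLp.toLp 2 (fun i => x (Fin.castSucc i))

/-- The graph domain `D = {(x, x_d) : x_d > φ(x)}`. -/
def graphDomain (n : ℕ) (φ : EuclideanSpace ℝ (Fin n) → ℝ) :
    Set (EuclideanSpace ℝ (Fin (n + 1))) :=
  {x | φ (proj n x) < x (Fin.last n)}

/-- The graph boundary `∂D = {(x, x_d) : x_d = φ(x)}`. -/
def graphBdry (n : ℕ) (φ : EuclideanSpace ℝ (Fin n) → ℝ) :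
    Set (EuclideanSpace ℝ (Fin (n + 1))) :=
  {x | x (Fin.last n) = φ (proj n x)}

/-- The outer unit normal `n_D(X) = (∇φ(x), -1)/√(1+|∇φ(x)|²)` at a boundary point. -/
noncomputable def outerNormal (n : ℕ) (φ : EuclideanSpace ℝ (Fin n) → ℝ)
    (x : EuclideanSpace ℝ (Fin (n + 1))) : EuclideanSpace ℝ (Fin (n + 1)) :=
  (Real.sqrt (1 + ‖gradient φ (proj n x)‖ ^ 2))⁻¹ •
    (WithLp.toLp 2 (Fin.snoc (fun i => gradient φ (proj n x) i) (-1)) : EuclideanSpace ℝ (Fin (n + 1)))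

/-! Writing `X = (x, φ x)` and `p = (x₀, z₀)`, the quantity `√(1 + |∇φ(x)|²) ⟨X - p, n_D(X)⟩`
equals `(z₀ - φ(x₀)) + (φ(x₀) - φ(x) - ⟨∇φ(x), x₀ - x⟩)`. The first term is at least
`dist(p, ∂D) ≥ r θ(r)`, witnessed by the boundary point `(x₀, φ(x₀))` straight below `p`; by the
mean value inequality the second is at least `-θ(r) r`, since `∇φ` moves by at most `θ(r)` along
the segment from `x` to `x₀`. -/

section Taylor

variable {E : Type*} [NormedAddCommGroup E] [InnerProductSpace ℝ E] [CompleteSpace E]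

theorem abs_sub_sub_inner_gradient_le {f : E → ℝ} (hf : Differentiable ℝ f) {C : ℝ} {a b : E}
    (hC : ∀ c ∈ segment ℝ a b, ‖gradient f c - gradient f a‖ ≤ C) :
    |f b - f a - ⟪gradient f a, b - a⟫| ≤ C * ‖b - a‖ := by
  let L : E → (E →L[ℝ] ℝ) := fun c => InnerProductSpace.toDual ℝ E (gradient f c)
  have hL : ∀ c ∈ segment ℝ a b, HasFDerivWithinAt f (L c) (segment ℝ a b) c :=
    fun c _ => (hf c).hasGradientAt.hasFDerivAt.hasFDerivWithinAt
  have hLC : ∀ c ∈ segment ℝ a b, ‖L c - L a‖ ≤ C := fun c hc => by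
    simpa only [L, ← map_sub, LinearIsometryEquiv.norm_map] using hC c hc
  simpa [L, Real.norm_eq_abs] using
    (convex_segment a b).norm_image_sub_le_of_norm_hasFDerivWithin_le' hL hLC (left_mem_segment ℝ a b) (right_mem_segment ℝ a b)

end Taylor

section Coordinates

variable {n : ℕ}

theorem proj_sub (x y : EuclideanSpace ℝ (Fin (n + 1))) : proj n (x - y) = proj n x - proj n y :=
  rfl

theorem norm_proj_le (x : EuclideanSpace ℝ (Fin (n + 1))) : ‖proj n x‖ ≤ ‖x‖ := by
  rw [EuclideanSpace.norm_eq, EuclideanSpace.norm_eq, Fin.sum_univ_castSucc]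
  exact Real.sqrt_le_sqrt (le_add_of_nonneg_right (sq_nonneg _))

theorem inner_toLp_snoc (v : EuclideanSpace ℝ (Fin (n + 1))) (g : EuclideanSpace ℝ (Fin n))
    (c : ℝ) :
    ⟪v, (WithLp.toLp 2 (Fin.snoc (fun i => g i) c) : EuclideanSpace ℝ (Fin (n + 1)))⟫
      = ⟪proj n v, g⟫ + v (Fin.last n) * c := by
  simp only [PiLp.inner_apply, Fin.sum_univ_castSucc, Fin.snoc_castSucc,
    Fin.snoc_last, RCLike.inner_apply, conj_trivial, proj]
  ring

theorem dist_eq_abs_sub_last_of_proj_eq {x y : EuclideanSpace ℝ (Fin (n + 1))}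
    (h : proj n x = proj n y) : dist x y = |x (Fin.last n) - y (Fin.last n)| := by
  have hi : ∀ i : Fin n, x (Fin.castSucc i) = y (Fin.castSucc i) := fun i =>
    congrFun (congrArg WithLp.ofLp h) i
  rw [EuclideanSpace.dist_eq, Fin.sum_univ_castSucc]
  simp [hi, Real.dist_eq, Real.sqrt_sq_eq_abs]

end Coordinates

section GraphDomain

variable {n : ℕ} {φ : EuclideanSpace ℝ (Fin n) → ℝ}

theorem infDist_graphBdry_le {p : EuclideanSpace ℝ (Fin (n + 1))} (hp : p ∈ graphDomain n φ) :
    infDist p (graphBdry n φ) ≤ p (Fin.last n) - φ (proj n p) := by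
  let q : EuclideanSpace ℝ (Fin (n + 1)) := WithLp.toLp 2 (Fin.snoc (proj n p).ofLp (φ (proj n p)))
  have hq : proj n q = proj n p := by ext i; simp [q, proj]
  have hq_last : q (Fin.last n) = φ (proj n p) := by simp [q]
  have hq_mem : q ∈ graphBdry n φ := by simp only [graphBdry, Set.mem_ofPred_eq, hq, hq_last]
  calc infDist p (graphBdry n φ) ≤ dist p q := infDist_le_dist_of_mem hq_mem
    _ = p (Fin.last n) - φ (proj n p) := by
      rw [dist_eq_abs_sub_last_of_proj_eq hq.symm, hq_last, abs_of_pos (sub_pos.2 hp)]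

theorem inner_sub_outerNormal (X p : EuclideanSpace ℝ (Fin (n + 1))) :
    ⟪X - p, outerNormal n φ X⟫ = (Real.sqrt (1 + ‖gradient φ (proj n X)‖ ^ 2))⁻¹ *
      (⟪proj n X - proj n p, gradient φ (proj n X)⟫ - (X (Fin.last n) - p (Fin.last n))) := by
  rw [outerNormal, real_inner_smul_right, inner_toLp_snoc, proj_sub, mul_neg_one, PiLp.sub_apply,
    ← sub_eq_add_neg]

end GraphDomain

theorem statement9_general (n : ℕ) (φ : EuclideanSpace ℝ (Fin n) → ℝ) (θ : ℝ → ℝ)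
    (hφ : ContDiff ℝ 1 φ) (hθmono : Monotone θ)
    (hmod : ∀ x y, ‖gradient φ x - gradient φ y‖ ≤ θ ‖x - y‖)
    (p : EuclideanSpace ℝ (Fin (n + 1))) (hp : p ∈ graphDomain n φ)
    (r : ℝ)
    (hcrit : r * θ r ≤ infDist p (graphBdry n φ)) :
    ∀ X ∈ graphBdry n φ ∩ ball p r, (0 : ℝ) ≤ ⟪X - p, outerNormal n φ X⟫ := by
  rintro X ⟨hX, hXr⟩
  set x := proj n X
  set x₀ := proj n p
  have hx₀x : ‖x₀ - x‖ < r := by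
    calc ‖x₀ - x‖ = ‖proj n (p - X)‖ := rfl
      _ ≤ ‖p - X‖ := norm_proj_le _
      _ < r := by rwa [← dist_eq_norm, dist_comm]
  have hθr : 0 ≤ θ r := (norm_nonneg _).trans ((hmod x x).trans
    (hθmono (by simpa using (norm_nonneg _).trans hx₀x.le)))
  have htaylor : |φ x₀ - φ x - ⟪gradient φ x, x₀ - x⟫| ≤ θ r * ‖x₀ - x‖ := by
    refine abs_sub_sub_inner_gradient_le (hφ.differentiable one_ne_zero) fun c hc => ?_
    exact (hmod c x).trans (hθmono ((norm_sub_le_of_mem_segment hc).trans hx₀x.le))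
  have hflip : ⟪x - x₀, gradient φ x⟫ = -⟪gradient φ x, x₀ - x⟫ := by
    rw [real_inner_comm, ← inner_neg_right, neg_sub]
  rw [inner_sub_outerNormal, hflip, show X (Fin.last n) = φ x from hX]
  refine mul_nonneg (by positivity) ?_
  linarith [neg_abs_le (φ x₀ - φ x - ⟪gradient φ x, x₀ - x⟫), infDist_graphBdry_le hp,
    mul_le_mul_of_nonneg_left hx₀x.le hθr]

/-- For a `C¹` graph domain whose gradient has modulus of continuity `θ`, if
`r θ(r) ≤ dist(p, ∂D)` then every boundary point `X ∈ B_r(p) ∩ ∂D` satisfies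
`⟨X - p, n_D(X)⟩ ≥ 0`. -/
theorem statement9 (n : ℕ) (φ : EuclideanSpace ℝ (Fin n) → ℝ) (θ : ℝ → ℝ)
    (hφ : ContDiff ℝ 1 φ) (hθmono : Monotone θ) (hθ0 : ∀ s, 0 ≤ θ s)
    (hmod : ∀ x y, ‖gradient φ x - gradient φ y‖ ≤ θ ‖x - y‖)
    (p : EuclideanSpace ℝ (Fin (n + 1))) (hp : p ∈ graphDomain n φ)
    (r : ℝ) (hr : 0 < r)
    (hcrit : r * θ r ≤ infDist p (graphBdry n φ)) :
    ∀ X ∈ graphBdry n φ ∩ ball p r, (0 : ℝ) ≤ ⟪X - p, outerNormal n φ X⟫ :=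
  statement9_general n φ θ hφ hθmono hmod p hp r hcrit
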